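/- arXiv:2301.11849 — 3 statements merged into one kernel-verified Lean document; each statement's English description precedes it below -/
import Mathlib

section
/- Fix k ≥ 2 and the homogeneous pattern T with T_ℓ = 1 iff ℓ ∈ {0, k+1}. Let G be the graph with vertex set {w, y, z} ∪ Y ∪ Z where Y = {y_1, ..., y_k} and Z = {z_1, ..., z_k}, and edges: the triangle {w,y}, {y,z}, {z,w}, plus {y, y_i} for all i ∈ [k] and {z, z_i} for all i ∈ [k]. Then G admits no pure Nash equilibrium of the binary public goods game with pattern T. -/
/-!
Each pendant `y_i` has the single neighbour `y`, so it plays `!s y` (as `1 ≠ k + 1`); likewise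
`z_i` plays `!s z`. Hence an inactive hub among `y, z` already sees `k` active pendants, so it
must not have exactly one active triangle neighbour, while an active hub sees at most two active
neighbours, fewer than `k + 1` as `k ≥ 2`, so both its triangle neighbours must be inactive. With
`w` active iff `y` and `z` are both inactive, each of the eight profiles on the triangle fails.
-/

/-- Number of active neighbors. -/
noncomputable def degA {Ω : Type} (Adj : Ω → Ω → Prop) (s : Ω → Bool) (v : Ω) : ℕ :=
  Set.ncard {u | Adj v u ∧ s u = true}

/-- PNE for the picky pattern `T_ℓ = 1` iff `ℓ ∈ {0, k+1}`. -/
def isPNE {Ω : Type} (k : ℕ) (Adj : Ω → Ω → Prop) (s : Ω → Bool) : Prop :=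
  ∀ v, s v = true ↔ (degA Adj s v = 0 ∨ degA Adj s v = k + 1)

/-- Vertices `{w, y, z} ∪ Y ∪ Z`: `inl 0 = w`, `inl 1 = y`, `inl 2 = z`,
`inr (inl i) = y_i ∈ Y`, `inr (inr i) = z_i ∈ Z`. -/
abbrev Gk (k : ℕ) := Fin 3 ⊕ (Fin k ⊕ Fin k)

/-- Adjacency: triangle on `{w, y, z}`, plus `y ~ y_i` and `z ~ z_i` for all `i`. -/
def adjGk (k : ℕ) : Gk k → Gk k → Prop
  | Sum.inl a, Sum.inl b => a ≠ b
  | Sum.inl a, Sum.inr (Sum.inl _) => a = 1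
  | Sum.inr (Sum.inl _), Sum.inl a => a = 1
  | Sum.inl a, Sum.inr (Sum.inr _) => a = 2
  | Sum.inr (Sum.inr _), Sum.inl a => a = 2
  | _, _ => False

open Finset

instance (k : ℕ) : DecidableRel (adjGk k) := by
  rintro (a | i | i) (b | j | j) <;> simp only [adjGk] <;> infer_instance

lemma degA_eq_card_filter {Ω : Type} [Fintype Ω] (Adj : Ω → Ω → Prop) [DecidableRel Adj]
    (s : Ω → Bool) (v : Ω) : degA Adj s v = #{u | Adj v u ∧ s u = true} := by
  rw [degA, Set.ncard_eq_toFinset_card', Set.toFinset_ofPred]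

namespace adjGk

variable {k : ℕ} (s : Gk k → Bool)

lemma degA_eq_sum (v : Gk k) :
    degA (adjGk k) s v = ∑ u, if adjGk k v u ∧ s u = true then 1 else 0 := by
  rw [degA_eq_card_filter, card_filter]

lemma degA_pendant_y (i : Fin k) : degA (adjGk k) s (.inr (.inl i)) = (s (.inl 1)).toNat := by
  simp [degA_eq_sum, Fintype.sum_sum_type, Fin.sum_univ_three, adjGk, Bool.toNat, cond_eq_ite]

lemma degA_pendant_z (i : Fin k) : degA (adjGk k) s (.inr (.inr i)) = (s (.inl 2)).toNat := by
  simp [degA_eq_sum, Fintype.sum_sum_type, Fin.sum_univ_three, adjGk, Bool.toNat, cond_eq_ite]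

lemma degA_w : degA (adjGk k) s (.inl 0) = (s (.inl 1)).toNat + (s (.inl 2)).toNat := by
  simp [degA_eq_sum, Fintype.sum_sum_type, Fin.sum_univ_three, adjGk, Bool.toNat, cond_eq_ite]

lemma degA_y : degA (adjGk k) s (.inl 1) =
    (s (.inl 0)).toNat + (s (.inl 2)).toNat + #{i | s (.inr (.inl i)) = true} := by
  simp [degA_eq_sum, Fintype.sum_sum_type, Fin.sum_univ_three, adjGk, Bool.toNat, cond_eq_ite]

lemma degA_z : degA (adjGk k) s (.inl 2) =
    (s (.inl 0)).toNat + (s (.inl 1)).toNat + #{i | s (.inr (.inr i)) = true} := by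
  simp [degA_eq_sum, Fintype.sum_sum_type, Fin.sum_univ_three, adjGk, Bool.toNat, cond_eq_ite]

end adjGk

namespace isPNE

open adjGk

variable {k : ℕ} {s : Gk k → Bool}

lemma pendant_y_eq_not (h : isPNE k (adjGk k) s) (hk : k ≠ 0) (i : Fin k) :
    s (.inr (.inl i)) = !s (.inl 1) := by
  have hi := h (.inr (.inl i))
  rw [degA_pendant_y] at hi
  cases hy : s (.inl 1) <;> simpa [hy, hk] using hi

lemma pendant_z_eq_not (h : isPNE k (adjGk k) s) (hk : k ≠ 0) (i : Fin k) :
    s (.inr (.inr i)) = !s (.inl 2) := by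
  have hi := h (.inr (.inr i))
  rw [degA_pendant_z] at hi
  cases hz : s (.inl 2) <;> simpa [hz, hk] using hi

lemma degA_y (h : isPNE k (adjGk k) s) (hk : k ≠ 0) : degA (adjGk k) s (.inl 1) =
    (s (.inl 0)).toNat + (s (.inl 2)).toNat + (!s (.inl 1)).toNat * k := by
  simp_rw [adjGk.degA_y, h.pendant_y_eq_not hk]
  cases s (.inl 1) <;> simp

lemma degA_z (h : isPNE k (adjGk k) s) (hk : k ≠ 0) : degA (adjGk k) s (.inl 2) =
    (s (.inl 0)).toNat + (s (.inl 1)).toNat + (!s (.inl 2)).toNat * k := by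
  simp_rw [adjGk.degA_z, h.pendant_z_eq_not hk]
  cases s (.inl 2) <;> simp

end isPNE

/-- For every `k ≥ 2`, the NEAR-OR core (triangle `{w,y,z}` with `k` pendant
vertices attached to each of `y` and `z`) admits no PNE of the binary public
goods game with pattern `T_ℓ = 1` iff `ℓ ∈ {0, k+1}`. -/
theorem stmt8 (k : ℕ) (hk : 2 ≤ k) : ¬ ∃ s : Gk k → Bool, isPNE k (adjGk k) s := by
  rintro ⟨s, h⟩
  have hw := h (.inl 0)
  have hy := h (.inl 1)
  have hz := h (.inl 2)
  rw [adjGk.degA_w] at hw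
  rw [h.degA_y (by omega)] at hy
  rw [h.degA_z (by omega)] at hz
  cases a : s (.inl 0) <;> cases b : s (.inl 1) <;> cases c : s (.inl 2) <;>
    simp [a, b, c] at hw hy hz <;> omega
end

section
/- Fix k = 1 and the homogeneous pattern T with T_ℓ = 1 iff ℓ ∈ {0, 2}. Let G_∨ be the NEAR-OR gadget: the 3-sun on {w, y, z, y', q, z'} (edges {w,y}, {w,z}, {y,z}, {y,y'}, {y,q}, {z,q}, {z,z'}, {y',q}, {q,z'}) together with ℓ operand vertices x_1, ..., x_ℓ each adjacent only (within the gadget) to w. Let G = (V, E) be any graph with V ∩ V(G_∨) = {x_1, ..., x_ℓ} and let H be the union of G and G_∨. Then H admits no pure Nash equilibrium s with Σ_{i=1}^ℓ s_{x_i} = 2. -/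
/-- Edges of the 3-sun on vertices `0 = w, 1 = y, 2 = z, 3 = y', 4 = q, 5 = z'`. -/
def sunEdges : List (Fin 6 × Fin 6) :=
  [(0, 1), (0, 2), (1, 2), (1, 3), (1, 4), (2, 4), (2, 5), (3, 4), (4, 5)]

/-- Adjacency relation of the 3-sun. -/
def sunAdj (a b : Fin 6) : Prop := (a, b) ∈ sunEdges ∨ (b, a) ∈ sunEdges

/-- The union `H` of an external graph `G` on `V` (sharing exactly the operand
vertices `x i`) with the NEAR-OR gadget for `k = 1`: the 3-sun on `Fin 6`, whose
top vertex `w = 0` is adjacent to every operand `x i`. -/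
def adjH {V : Type} {l : ℕ} (AdjV : V → V → Prop) (x : Fin l → V) :
    (V ⊕ Fin 6) → (V ⊕ Fin 6) → Prop
  | Sum.inl a, Sum.inl b => AdjV a b
  | Sum.inl a, Sum.inr g => g = 0 ∧ ∃ i, a = x i
  | Sum.inr g, Sum.inl a => g = 0 ∧ ∃ i, a = x i
  | Sum.inr g, Sum.inr g' => sunAdj g g'

theorem Set.ncard_eq_ncard_preimage_inl_add_ncard_preimage_inr {α β : Type*}
    {s : Set (α ⊕ β)} (hs : s.Finite) :
    s.ncard = (Sum.inl ⁻¹' s).ncard + (Sum.inr ⁻¹' s).ncard := by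
  obtain ⟨hl, hr⟩ := Set.finite_preimage_inl_and_inr.mpr hs
  conv_lhs => rw [← Set.image_preimage_inl_union_image_preimage_inr s]
  rw [Set.ncard_union_eq Set.disjoint_image_inl_image_inr (hl.image _) (hr.image _),
    Set.ncard_image_of_injective _ Sum.inl_injective,
    Set.ncard_image_of_injective _ Sum.inr_injective]

instance (a b : Fin 6) : Decidable (sunAdj a b) := by
  unfold sunAdj; infer_instance

def sunActiveDeg (b : Fin 6 → Bool) (g : Fin 6) : ℕ :=
  (Finset.univ.filter fun g' => sunAdj g g' ∧ b g' = true).card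

theorem sun_not_stable_of_two_active_at_top (b : Fin 6 → Bool) :
    ¬ ∀ g, b g = true ↔
      (sunActiveDeg b g + if g = 0 then 2 else 0) = 0 ∨
      (sunActiveDeg b g + if g = 0 then 2 else 0) = 2 := by
  revert b
  decide

theorem degA_adjH_inr {V : Type} {l : ℕ} (AdjV : V → V → Prop) (x : Fin l → V)
    (s : V ⊕ Fin 6 → Bool) (g : Fin 6) :
    degA (adjH AdjV x) s (Sum.inr g) =
      sunActiveDeg (s ∘ Sum.inr) g +
        if g = 0 then (x '' {i | s (Sum.inl (x i)) = true}).ncard else 0 := by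
  have hfin : {u | adjH AdjV x (Sum.inr g) u ∧ s u = true}.Finite :=
    Set.finite_preimage_inl_and_inr.mp
      ⟨(Set.finite_range x).subset fun a ⟨⟨_, i, hi⟩, _⟩ => ⟨i, hi.symm⟩, Set.toFinite _⟩
  rw [degA, Set.ncard_eq_ncard_preimage_inl_add_ncard_preimage_inr hfin, add_comm]
  congr 1
  · simp [sunActiveDeg, Set.ncard_eq_toFinset_card', adjH]
  · split_ifs with hg
    · congr 1
      ext a
      constructor
      · rintro ⟨⟨-, i, rfl⟩, ha⟩
        exact ⟨i, ha, rfl⟩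
      · rintro ⟨i, hi, rfl⟩
        exact ⟨⟨hg, i, rfl⟩, hi⟩
    · simp [adjH, hg]

theorem stmt9_general (V : Type) (l : ℕ)
    (AdjV : V → V → Prop)
    (x : Fin l → V) (hx : Function.Injective x) :
    ¬ ∃ s : V ⊕ Fin 6 → Bool, isPNE 1 (adjH AdjV x) s ∧
      Set.ncard {i : Fin l | s (Sum.inl (x i)) = true} = 2 := by
  rintro ⟨s, hPNE, hcard⟩
  apply sun_not_stable_of_two_active_at_top (s ∘ Sum.inr)
  intro g
  have hdeg := degA_adjH_inr AdjV x s g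
  rw [Set.ncard_image_of_injective _ hx, hcard] at hdeg
  simpa [hdeg] using hPNE (Sum.inr g)

/-- The NEAR-OR gadget for `k = 1` is restrictive at `k + 1 = 2`: the union graph `H`
admits no PNE in which exactly `2` of the operand vertices are active. -/
theorem stmt9 (V : Type) [Fintype V] (l : ℕ)
    (AdjV : V → V → Prop) (hsym : Symmetric AdjV) (hirr : Irreflexive AdjV)
    (x : Fin l → V) (hx : Function.Injective x) :
    ¬ ∃ s : V ⊕ Fin 6 → Bool, isPNE 1 (adjH AdjV x) s ∧
      Set.ncard {i : Fin l | s (Sum.inl (x i)) = true} = 2 :=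
  stmt9_general V l AdjV x hx
end

section
/- Fix k ≥ 1 and pattern T with T_ℓ = 1 iff ℓ ∈ {0, k+1}. Suppose the FALSE gadget G_⊥ with operand vertex x is restrictive (every PNE t of any graph containing G_⊥ attached at x satisfies t_x = 0) and the TRUE gadget is restrictive (every PNE assigns 1 to its operand). Consider the EQUIV gadget: a vertex y that is the operand of a FALSE gadget, adjacent to two external operand vertices x_1, x_2 and to k vertices z_1, ..., z_k, each z_i being the operand of its own TRUE gadget. Then in every PNE t of a graph H containing this EQUIV gadget (with x_1, x_2 the only vertices shared with the external graph), t_{x_1} = t_{x_2}. -/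
/-
If `x₁` and `x₂` disagree, say `t x₁ = 1` and `t x₂ = 0`, then the active neighbours of `y` are
exactly `x₁, z_1, …, z_k`, so `y` has `k + 1` active neighbours and its best response is to play
`1`, contradicting the FALSE gadget at `y`.
-/

open Function

lemma Set.ncard_insert_range_of_injective {Ω : Type} {k : ℕ} {z : Fin k → Ω}
    (hz : Injective z) {a : Ω} (ha : ∀ i, a ≠ z i) :
    (insert a (Set.range z)).ncard = k + 1 := by
  rw [Set.ncard_insert_of_notMem (by simpa using fun i => (ha i).symm) (Set.finite_range z),
    Set.ncard_range_of_injective hz, Nat.card_fin]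

lemma isPNE.eq_true_of_degA_eq {Ω : Type} {k : ℕ} {Adj : Ω → Ω → Prop} {t : Ω → Bool}
    (ht : isPNE k Adj t) {v : Ω} (hv : degA Adj t v = k + 1) : t v = true :=
  (ht v).mpr (Or.inr hv)

lemma isPNE.eq_true_of_equiv_gadget {Ω : Type} {k : ℕ} {Adj : Ω → Ω → Prop} {t : Ω → Bool}
    (ht : isPNE k Adj t) {y a b : Ω} {z : Fin k → Ω} (hz : Injective z) (haz : ∀ i, a ≠ z i)
    (hNy : ∀ u, Adj y u ↔ (u = a ∨ u = b ∨ ∃ i, u = z i))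
    (hy : t y = false) (htz : ∀ i, t (z i) = true) (ha : t a = true) : t b = true := by
  by_contra hb
  have hactive : {u | Adj y u ∧ t u = true} = insert a (Set.range z) := by
    ext u
    simp only [Set.mem_ofPred_eq, hNy, Set.mem_insert_iff, Set.mem_range]
    constructor
    · rintro ⟨rfl | rfl | ⟨i, rfl⟩, hu⟩
      · exact Or.inl rfl
      · exact absurd hu hb
      · exact Or.inr ⟨i, rfl⟩
    · rintro (rfl | ⟨i, rfl⟩)
      · exact ⟨Or.inl rfl, ha⟩
      · exact ⟨Or.inr (Or.inr ⟨i, rfl⟩), htz i⟩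
  have hdeg : degA Adj t y = k + 1 := by
    rw [degA, hactive, Set.ncard_insert_range_of_injective hz haz]
  simp [ht.eq_true_of_degA_eq hdeg] at hy

theorem stmt18_general (k : ℕ)
    (Ω : Type)
    (Adj : Ω → Ω → Prop)
    (y x₁ x₂ : Ω) (z : Fin k → Ω)
    (hzinj : Function.Injective z)
    (hxz : ∀ i, x₁ ≠ z i ∧ x₂ ≠ z i)
    (hNy : ∀ u, Adj y u ↔ (u = x₁ ∨ u = x₂ ∨ ∃ i, u = z i))
    (hFALSE : ∀ t : Ω → Bool, isPNE k Adj t → t y = false)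
    (hTRUE : ∀ t : Ω → Bool, isPNE k Adj t → ∀ i, t (z i) = true) :
    ∀ t : Ω → Bool, isPNE k Adj t → t x₁ = t x₂ := by
  intro t ht
  have hy := hFALSE t ht
  have hz := hTRUE t ht
  have hNy' : ∀ u, Adj y u ↔ (u = x₂ ∨ u = x₁ ∨ ∃ i, u = z i) :=
    fun u => (hNy u).trans or_left_comm
  rw [Bool.eq_iff_iff]
  exact ⟨ht.eq_true_of_equiv_gadget hzinj (fun i => (hxz i).1) hNy hy hz,
    ht.eq_true_of_equiv_gadget hzinj (fun i => (hxz i).2) hNy' hy hz⟩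

/-- Restrictiveness of the EQUIV gadget: in a graph `H` containing a vertex `y`
(the operand of a FALSE gadget, hence inactive in every PNE) whose neighbors are
exactly the two external operand vertices `x₁, x₂` and `k` vertices `z_1, …, z_k`
(each the operand of a TRUE gadget, hence active in every PNE), every PNE `t` of
the binary public goods game with pattern `T_ℓ = 1` iff `ℓ ∈ {0, k+1}` satisfies
`t x₁ = t x₂`. -/
theorem stmt18 (k : ℕ) (hk : 1 ≤ k)
    (Ω : Type) [Fintype Ω]
    (Adj : Ω → Ω → Prop) (hsym : Symmetric Adj) (hirr : Irreflexive Adj)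
    (y x₁ x₂ : Ω) (z : Fin k → Ω)
    (hzinj : Function.Injective z)
    (hx12 : x₁ ≠ x₂)
    (hxz : ∀ i, x₁ ≠ z i ∧ x₂ ≠ z i)
    (hyx : y ≠ x₁ ∧ y ≠ x₂ ∧ ∀ i, y ≠ z i)
    (hNy : ∀ u, Adj y u ↔ (u = x₁ ∨ u = x₂ ∨ ∃ i, u = z i))
    (hFALSE : ∀ t : Ω → Bool, isPNE k Adj t → t y = false)
    (hTRUE : ∀ t : Ω → Bool, isPNE k Adj t → ∀ i, t (z i) = true) :
    ∀ t : Ω → Bool, isPNE k Adj t → t x₁ = t x₂ :=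
  stmt18_general k Ω Adj y x₁ x₂ z hzinj hxz hNy hFALSE hTRUE
end
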